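/- arXiv:1709.07414 — 4 statements merged into one kernel-verified Lean document; each statement's English description precedes it below -/
import Mathlib

section
/- Let G be a circularly connected bidirected graph, let α ∈ {+, −}, and let s be a vertex of G. Then for every vertex t of G there exists a sign β ∈ {+, −} such that G has an (α, β)-ditrail from s to t. -/
/-- A bidirected graph on vertex type `V` with edge type `E`: each edge `e` has two
designated ends, `fst e` and `snd e`, and each end carries a sign
(`true` = `+`, `false` = `-`). -/
structure BidirGraph (V : Type*) (E : Type*) where
  fst : E → V
  snd : E → V
  sgnFst : E → Bool
  sgnSnd : E → Bool

namespace BidirGraph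

variable {V E : Type*} (G : BidirGraph V E)

/-- A step is an edge together with a direction of traversal
(`true` = from `fst` to `snd`). -/
def stepTail (s : E × Bool) : V := if s.2 then G.fst s.1 else G.snd s.1

def stepHead (s : E × Bool) : V := if s.2 then G.snd s.1 else G.fst s.1

/-- The sign of the start vertex of a step over its edge. -/
def stepTailSign (s : E × Bool) : Bool := if s.2 then G.sgnFst s.1 else G.sgnSnd s.1

/-- The sign of the end vertex of a step over its edge. -/
def stepHeadSign (s : E × Bool) : Bool := if s.2 then G.sgnSnd s.1 else G.sgnFst s.1

/-- `L` is a walk from `u` to `v`. -/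
def IsWalk (u v : V) (L : List (E × Bool)) : Prop :=
  List.Chain' (fun s t => G.stepHead s = G.stepTail t) L ∧
  (L = [] → u = v) ∧
  (∀ s, L.head? = some s → G.stepTail s = u) ∧
  (∀ s, L.getLast? = some s → G.stepHead s = v)

/-- A ditrail: a walk with pairwise distinct edges in which, at every internal vertex,
the signs over the preceding and the succeeding edges are distinct. -/
def IsDitrail (u v : V) (L : List (E × Bool)) : Prop :=
  G.IsWalk u v L ∧ (L.map Prod.fst).Nodup ∧
  List.Chain' (fun s t => G.stepHeadSign s ≠ G.stepTailSign t) L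

/-- An `(α, β)`-ditrail from `u` to `v`: a ditrail with at least one edge that starts
with sign `α` and ends with sign `β`; a trivial (edgeless) ditrail counts as an
`(α, β)`-ditrail whenever `α ≠ β`. -/
def IsABDitrail (α β : Bool) (u v : V) (L : List (E × Bool)) : Prop :=
  G.IsDitrail u v L ∧
  ((L = [] ∧ α ≠ β) ∨
   (L ≠ [] ∧ (∀ s, L.head? = some s → G.stepTailSign s = α) ∧
    (∀ s, L.getLast? = some s → G.stepHeadSign s = β)))

/-- An edge is circular if some cyclic ditrail (a closed `(α, -α)`-ditrail) contains it. -/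
def IsCircular (e : E) : Prop :=
  ∃ (v : V) (α : Bool) (L : List (E × Bool)),
    G.IsABDitrail α (!α) v v L ∧ ∃ d : Bool, (e, d) ∈ L

/-- Two vertices are circularly connected if some path (a walk without repeated
vertices) between them uses only circular edges. -/
def CircConn (u v : V) : Prop :=
  ∃ L : List (E × Bool), G.IsWalk u v L ∧ (u :: L.map G.stepHead).Nodup ∧
    ∀ p ∈ L, G.IsCircular p.1

/-- A bidirected graph is circularly connected if every two vertices are
circularly connected. -/
def CircularlyConnected : Prop := ∀ u v : V, G.CircConn u v

/-- The vertex set of a circular component: an equivalence class of circular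
connectivity. -/
def IsCircComponent (C : Set V) : Prop := ∃ v : V, C = {u | G.CircConn u v}

/-- The relation `∼_α`: `u ∼_α v` iff `u = v`, or `u` and `v` are circularly connected
and there is no `(α, α)`-ditrail between them. -/
def SimRel (α : Bool) (u v : V) : Prop :=
  u = v ∨ (G.CircConn u v ∧
    ¬ ∃ L : List (E × Bool), G.IsABDitrail α α u v L ∨ G.IsABDitrail α α v u L)

/-- A bidirected graph is digraphic if for every edge the two ends carry distinct
signs, i.e., exactly one end has sign `+` and the other has sign `-`. -/
def IsDigraphic : Prop := ∀ e : E, G.sgnFst e ≠ G.sgnSnd e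

/-- A dipath: a ditrail in which no vertex occurs more than once. -/
def IsDipath (u v : V) (L : List (E × Bool)) : Prop :=
  G.IsDitrail u v L ∧ (u :: L.map G.stepHead).Nodup

/-- Two vertices of a digraphic bidirected graph are strongly connected if there are
`(-, +)`-ditrails from `u` to `v` and from `v` to `u`. -/
def StronglyConn (u v : V) : Prop :=
  (∃ L, G.IsABDitrail false true u v L) ∧ (∃ L, G.IsABDitrail false true v u L)

end BidirGraph

/-!
Follow a path of circular edges from `s` to `t`, keeping an `(α, ·)`-ditrail `T` from `s` to the
current vertex. When the path enters an edge of a cyclic ditrail `C`, the ditrail `T` can be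
redirected to any vertex of `C`. If `T` shares an edge with `C`, cut `T` just before that edge: the
prefix is shorter and still ends on `C`. Otherwise rotate `C` so that it starts at the end of `T`,
reversed if necessary so that its first sign is opposite to the last sign of `T`, and append to `T`
the part of `C` up to the target vertex.
-/

namespace BidirGraph

variable {V E : Type*} {G : BidirGraph V E} {α β γ : Bool} {s t u v w x : V} {e e' : E}
  {p : E × Bool} {L L₁ L₂ T C : List (E × Bool)}

lemma stepTail_eq_fst_or_eq_snd (p : E × Bool) :
    G.stepTail p = G.fst p.1 ∨ G.stepTail p = G.snd p.1 := by
  obtain ⟨e, _ | _⟩ := p <;> simp [stepTail]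

lemma stepHead_eq_fst_or_eq_snd (p : E × Bool) :
    G.stepHead p = G.fst p.1 ∨ G.stepHead p = G.snd p.1 := by
  obtain ⟨e, _ | _⟩ := p <;> simp [stepHead]

lemma eq_stepTail_or_eq_stepHead (hv : v = G.fst p.1 ∨ v = G.snd p.1) :
    v = G.stepTail p ∨ v = G.stepHead p := by
  obtain ⟨e, _ | _⟩ := p <;> simp only [stepTail, stepHead] <;> tauto

lemma isWalk_nil : G.IsWalk u v [] ↔ u = v := by
  simp [IsWalk, List.Chain']

lemma isWalk_cons : G.IsWalk u v (p :: L) ↔ G.stepTail p = u ∧ G.IsWalk (G.stepHead p) v L := by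
  cases L with
  | nil => simp [IsWalk, List.Chain', eq_comm]
  | cons q L => simp [IsWalk, List.Chain', eq_comm]; tauto

lemma isABDitrail_nil : G.IsABDitrail α β u v [] ↔ u = v ∧ α ≠ β := by
  simp [IsABDitrail, IsDitrail, isWalk_nil, List.Chain']

lemma isABDitrail_cons :
    G.IsABDitrail α β u v (p :: L) ↔ G.stepTail p = u ∧ G.stepTailSign p = α ∧
      p.1 ∉ L.map Prod.fst ∧ G.IsABDitrail (!G.stepHeadSign p) β (G.stepHead p) v L := by
  cases L with
  | nil => simp [IsABDitrail, IsDitrail, isWalk_cons, isWalk_nil, List.Chain']; tauto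
  | cons q L =>
    simp [IsABDitrail, IsDitrail, isWalk_cons, List.Chain', Bool.eq_not, ne_comm]
    tauto

lemma IsABDitrail.nil (α : Bool) (u : V) : G.IsABDitrail α (!α) u u [] :=
  isABDitrail_nil.mpr ⟨rfl, (Bool.eq_not_self α).mp⟩

lemma IsABDitrail.nodup (h : G.IsABDitrail α β u v L) : (L.map Prod.fst).Nodup :=
  h.1.2.1

lemma IsABDitrail.append (h₁ : G.IsABDitrail α β u x L₁) (h₂ : G.IsABDitrail (!β) γ x v L₂)
    (hL : ((L₁ ++ L₂).map Prod.fst).Nodup) : G.IsABDitrail α γ u v (L₁ ++ L₂) := by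
  induction L₁ generalizing α u with
  | nil =>
    obtain ⟨rfl, hαβ⟩ := isABDitrail_nil.mp h₁
    rwa [← Bool.eq_not.mpr hαβ] at h₂
  | cons q L₁ ih =>
    obtain ⟨hu, hα, -, h₁⟩ := isABDitrail_cons.mp h₁
    rw [List.cons_append, List.map_cons, List.nodup_cons] at hL
    exact isABDitrail_cons.mpr ⟨hu, hα, hL.1, ih h₁ hL.2⟩

lemma IsABDitrail.exists_split (h : G.IsABDitrail α γ u v (L₁ ++ L₂)) :
    ∃ x β, G.IsABDitrail α β u x L₁ ∧ G.IsABDitrail (!β) γ x v L₂ := by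
  induction L₁ generalizing α u with
  | nil => exact ⟨u, !α, .nil α u, by rwa [Bool.not_not]⟩
  | cons q L₁ ih =>
    obtain ⟨hu, hα, hq, h⟩ := isABDitrail_cons.mp h
    obtain ⟨x, β, h₁, h₂⟩ := ih h
    refine ⟨x, β, isABDitrail_cons.mpr ⟨hu, hα, ?_, h₁⟩, h₂⟩
    exact fun hq' => hq (List.map_subset _ (List.subset_append_left _ _) hq')

lemma IsABDitrail.exists_split_at_end (h : G.IsABDitrail α γ u w L) (he : e ∈ L.map Prod.fst)
    (hv : v = G.fst e ∨ v = G.snd e) :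
    ∃ β P Q, L = P ++ Q ∧ G.IsABDitrail α β u v P ∧ G.IsABDitrail (!β) γ v w Q := by
  obtain ⟨p, hp, rfl⟩ := List.mem_map.mp he
  obtain ⟨A, B, rfl⟩ := List.append_of_mem hp
  rcases eq_stepTail_or_eq_stepHead hv with rfl | rfl
  · obtain ⟨x, β, hA, hpB⟩ := h.exists_split
    obtain rfl := (isABDitrail_cons.mp hpB).1
    exact ⟨β, A, p :: B, rfl, hA, hpB⟩
  · rw [← List.singleton_append, ← List.append_assoc] at h
    obtain ⟨x, β, hAp, hB⟩ := h.exists_split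
    obtain ⟨_, _, -, hp'⟩ := hAp.exists_split
    obtain rfl := (isABDitrail_nil.mp (isABDitrail_cons.mp hp').2.2.2).1
    exact ⟨β, A ++ [p], B, by simp, hAp, hB⟩

def flipStep (p : E × Bool) : E × Bool := (p.1, !p.2)

def reverseWalk (L : List (E × Bool)) : List (E × Bool) := (L.map flipStep).reverse

lemma map_fst_reverseWalk (L : List (E × Bool)) :
    (reverseWalk L).map Prod.fst = (L.map Prod.fst).reverse := by
  simp [reverseWalk, flipStep, Function.comp_def]

lemma IsABDitrail.reverse (h : G.IsABDitrail α β u v L) :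
    G.IsABDitrail β α v u (reverseWalk L) := by
  induction L generalizing α u with
  | nil =>
    obtain ⟨rfl, hαβ⟩ := isABDitrail_nil.mp h
    exact isABDitrail_nil.mpr ⟨rfl, hαβ.symm⟩
  | cons q L ih =>
    obtain ⟨rfl, rfl, hq, h⟩ := isABDitrail_cons.mp h
    have hflip : G.IsABDitrail (!!G.stepHeadSign q) (G.stepTailSign q) (G.stepHead q)
        (G.stepTail q) [flipStep q] := by
      obtain ⟨e, _ | _⟩ := q <;>
        simp [isABDitrail_cons, isABDitrail_nil, flipStep, stepTail, stepHead, stepTailSign,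
          stepHeadSign]
    have hnodup : ((reverseWalk L ++ [flipStep q]).map Prod.fst).Nodup := by
      rw [List.map_append, map_fst_reverseWalk]
      refine List.nodup_append.mpr ⟨List.nodup_reverse.mpr h.nodup, List.nodup_singleton _, ?_⟩
      rintro a ha b hb rfl
      simp only [flipStep, List.map_cons, List.map_nil, List.mem_singleton] at hb
      exact hq (hb ▸ List.mem_reverse.mp ha)
    simpa [reverseWalk] using (ih h).append hflip hnodup

lemma IsABDitrail.exists_rotate (h : G.IsABDitrail γ (!γ) w w C) (he : e ∈ C.map Prod.fst)
    (hx : x = G.fst e ∨ x = G.snd e) (δ : Bool) :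
    ∃ C', G.IsABDitrail δ (!δ) x x C' ∧ (C'.map Prod.fst).Perm (C.map Prod.fst) := by
  obtain ⟨β, P, Q, rfl, hP, hQ⟩ := h.exists_split_at_end he hx
  have hperm : ((Q ++ P).map Prod.fst).Perm ((P ++ Q).map Prod.fst) :=
    List.perm_append_comm.map _
  have hQP : G.IsABDitrail (!β) β x x (Q ++ P) :=
    hQ.append (by rwa [Bool.not_not]) (hperm.nodup_iff.mpr h.nodup)
  rcases Bool.eq_or_eq_not δ β with rfl | rfl
  · refine ⟨reverseWalk (Q ++ P), by simpa using hQP.reverse, ?_⟩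
    rw [map_fst_reverseWalk]
    exact (List.reverse_perm _).trans hperm
  · exact ⟨Q ++ P, by rwa [Bool.not_not], hperm⟩

lemma exists_abDitrail_of_disjoint_cycle (hT : G.IsABDitrail α β s x T)
    (hC : G.IsABDitrail γ (!γ) w w C) (hTC : (T.map Prod.fst).Disjoint (C.map Prod.fst))
    (he : e ∈ C.map Prod.fst) (hx : x = G.fst e ∨ x = G.snd e)
    (he' : e' ∈ C.map Prod.fst) (hv : v = G.fst e' ∨ v = G.snd e') :
    ∃ β' L, G.IsABDitrail α β' s v L := by
  obtain ⟨C', hC', hperm⟩ := hC.exists_rotate he hx (!β)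
  obtain ⟨β', P, Q, rfl, hP, -⟩ := hC'.exists_split_at_end (hperm.mem_iff.mpr he') hv
  have hPC : P.map Prod.fst ⊆ C.map Prod.fst := fun f hf =>
    hperm.subset (by rw [List.map_append]; exact List.mem_append_left _ hf)
  refine ⟨β', T ++ P, hT.append hP ?_⟩
  rw [List.map_append]
  exact hT.nodup.append hP.nodup (List.disjoint_of_subset_right hPC hTC)

lemma exists_abDitrail_of_cycle (hT : G.IsABDitrail α β s x T)
    (hC : G.IsABDitrail γ (!γ) w w C) (he : e ∈ C.map Prod.fst) (hx : x = G.fst e ∨ x = G.snd e)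
    (he' : e' ∈ C.map Prod.fst) (hv : v = G.fst e' ∨ v = G.snd e') :
    ∃ β' L, G.IsABDitrail α β' s v L := by
  induction hn : T.length using Nat.strong_induction_on generalizing T β x e with
  | _ n ih =>
    by_cases hTC : (T.map Prod.fst).Disjoint (C.map Prod.fst)
    · exact exists_abDitrail_of_disjoint_cycle hT hC hTC he hx he' hv
    obtain ⟨f, hfT, hfC⟩ : ∃ f ∈ T.map Prod.fst, f ∈ C.map Prod.fst := by
      simpa only [List.Disjoint, not_forall, exists_prop, imp_false, not_not] using hTC
    obtain ⟨p, hp, rfl⟩ := List.mem_map.mp hfT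
    obtain ⟨A, B, rfl⟩ := List.append_of_mem hp
    obtain ⟨y, β₁, hA, hpB⟩ := hT.exists_split
    obtain rfl := (isABDitrail_cons.mp hpB).1
    exact ih A.length (by simp [← hn]) hA hfC (stepTail_eq_fst_or_eq_snd p) rfl

lemma exists_abDitrail_of_circular_walk (hT : G.IsABDitrail α β s x T) (hL : G.IsWalk x t L)
    (hcirc : ∀ p ∈ L, G.IsCircular p.1) : ∃ β' L', G.IsABDitrail α β' s t L' := by
  induction L generalizing x β T with
  | nil => exact ⟨β, T, isWalk_nil.mp hL ▸ hT⟩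
  | cons p L ih =>
    obtain ⟨rfl, hrest⟩ := isWalk_cons.mp hL
    obtain ⟨w, γ, C, hC, d, hpC⟩ := hcirc p List.mem_cons_self
    have he : p.1 ∈ C.map Prod.fst := List.mem_map.mpr ⟨_, hpC, rfl⟩
    obtain ⟨β', T', hT'⟩ := exists_abDitrail_of_cycle hT hC he (stepTail_eq_fst_or_eq_snd p) he
      (stepHead_eq_fst_or_eq_snd p)
    exact ih hT' hrest fun q hq => hcirc q (List.mem_cons_of_mem _ hq)

end BidirGraph

/-- Let `G` be a circularly connected bidirected graph, `α` a sign and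
`s` a vertex. Then for every vertex `t` there is a sign `β` such that `G` has an
`(α, β)`-ditrail from `s` to `t`. -/
theorem circularlyConnected_exists_ditrail {V E : Type*} (G : BidirGraph V E)
    (hG : G.CircularlyConnected) (α : Bool) (s t : V) :
    ∃ (β : Bool) (L : List (E × Bool)), G.IsABDitrail α β s t L := by
  obtain ⟨L, hL, -, hcirc⟩ := hG s t
  exact BidirGraph.exists_abDitrail_of_circular_walk (.nil α s) hL hcirc
end

section
/- Let G be a digraphic bidirected graph and let u and v be vertices joined by an edge e. Then e is circular if and only if u and v are strongly connected, i.e., there are (−, +)-ditrails both from u to v and from v to u. -/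
/-!
In a digraphic graph the sign condition of a ditrail forces all of its steps to leave their
tails with one and the same sign, so a `(-, +)`-ditrail is just a trail traversing every edge
from its `-` end to its `+` end, and a `(+, -)`-ditrail is the reverse of one. Let `s` be the
edge `e` traversed this way. A closed such trail through `e`, rotated to start right after `s`,
is a trail back from the head of `s` to its tail; conversely such a trail, cut after its
use of `e` and closed up by `s`, is a cyclic ditrail through `e`. Since `s` alone already leads
from its tail to its head, both conditions amount to a `(-, +)`-ditrail back along `e`.
-/

namespace BidirGraph

variable {V E : Type*} {G : BidirGraph V E}

lemma stepHeadSign_eq_not_stepTailSign (hG : G.IsDigraphic) (s : E × Bool) :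
    G.stepHeadSign s = !G.stepTailSign s := by
  obtain ⟨e, d⟩ := s
  have := hG e
  cases d <;> cases h₁ : G.sgnFst e <;> cases h₂ : G.sgnSnd e <;>
    simp_all [stepHeadSign, stepTailSign]

/-- The step along `e` that leaves its tail with sign `-`. -/
def forwardStep (G : BidirGraph V E) (e : E) : E × Bool := (e, !G.sgnFst e)

lemma stepTailSign_eq_false_iff (hG : G.IsDigraphic) {e : E} {d : Bool} :
    G.stepTailSign (e, d) = false ↔ (e, d) = G.forwardStep e := by
  have := hG e
  cases d <;> cases h₁ : G.sgnFst e <;> cases h₂ : G.sgnSnd e <;>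
    simp_all [stepTailSign, forwardStep]

lemma isWalk_nil_s4 (u : V) : G.IsWalk u u [] :=
  ⟨List.isChain_nil, fun _ => rfl, by simp, by simp⟩

lemma isWalk_cons_iff {u w : V} {s : E × Bool} {L : List (E × Bool)} :
    G.IsWalk u w (s :: L) ↔ u = G.stepTail s ∧ G.IsWalk (G.stepHead s) w L := by
  constructor
  · rintro ⟨hc, -, hh, hl⟩
    refine ⟨(hh s rfl).symm, hc.tail, fun hL => ?_, fun t ht => ?_, fun t ht => ?_⟩
    · subst hL; exact hl s rfl
    · cases L with
      | nil => simp at ht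
      | cons b L => cases ht; exact (List.isChain_cons_cons.mp hc).1.symm
    · cases L with
      | nil => simp at ht
      | cons b L => exact hl t (by rwa [List.getLast?_cons_cons])
  · rintro ⟨rfl, hc, hn, hh, hl⟩
    refine ⟨?_, by simp, by simp, fun t ht => ?_⟩
    · cases L with
      | nil => exact List.isChain_singleton _
      | cons b L => exact List.isChain_cons_cons.mpr ⟨(hh b rfl).symm, hc⟩
    · cases L with
      | nil => cases ht; exact hn rfl
      | cons b L => exact hl t (by rwa [List.getLast?_cons_cons] at ht)

lemma isWalk_append_iff {u w : V} {L₁ L₂ : List (E × Bool)} :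
    G.IsWalk u w (L₁ ++ L₂) ↔ ∃ m, G.IsWalk u m L₁ ∧ G.IsWalk m w L₂ := by
  induction L₁ generalizing u with
  | nil =>
    refine ⟨fun h => ⟨u, isWalk_nil_s4 u, h⟩, ?_⟩
    rintro ⟨m, hu, h⟩
    rwa [hu.2.1 rfl]
  | cons s L₁ ih =>
    simp only [List.cons_append, isWalk_cons_iff, ih]
    exact ⟨fun ⟨hu, m, h₁, h₂⟩ => ⟨m, ⟨hu, h₁⟩, h₂⟩,
      fun ⟨m, ⟨hu, h₁⟩, h₂⟩ => ⟨hu, m, h₁, h₂⟩⟩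

lemma isWalk_singleton (s : E × Bool) : G.IsWalk (G.stepTail s) (G.stepHead s) [s] :=
  isWalk_cons_iff.mpr ⟨rfl, isWalk_nil_s4 _⟩

def stepReverse (s : E × Bool) : E × Bool := (s.1, !s.2)

@[simp] lemma stepTail_stepReverse (s : E × Bool) :
    G.stepTail (stepReverse s) = G.stepHead s := by
  obtain ⟨e, d⟩ := s; cases d <;> rfl

@[simp] lemma stepHead_stepReverse (s : E × Bool) :
    G.stepHead (stepReverse s) = G.stepTail s := by
  obtain ⟨e, d⟩ := s; cases d <;> rfl

@[simp] lemma stepTailSign_stepReverse (s : E × Bool) :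
    G.stepTailSign (stepReverse s) = G.stepHeadSign s := by
  obtain ⟨e, d⟩ := s; cases d <;> rfl

lemma IsWalk.reverse {u v : V} {L : List (E × Bool)} (h : G.IsWalk u v L) :
    G.IsWalk v u (L.reverse.map stepReverse) := by
  induction L generalizing u with
  | nil => rw [h.2.1 rfl]; exact isWalk_nil_s4 v
  | cons s L ih =>
    obtain ⟨rfl, hL⟩ := isWalk_cons_iff.mp h
    simp only [List.reverse_cons, List.map_append, List.map_cons, List.map_nil]
    refine isWalk_append_iff.mpr ⟨G.stepHead s, ih hL, ?_⟩
    simpa using isWalk_singleton (G := G) (stepReverse s)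

def IsTrail (G : BidirGraph V E) (u v : V) (L : List (E × Bool)) : Prop :=
  G.IsWalk u v L ∧ (L.map Prod.fst).Nodup

def IsDirTrail (G : BidirGraph V E) (u v : V) (L : List (E × Bool)) : Prop :=
  G.IsTrail u v L ∧ ∀ s ∈ L, G.stepTailSign s = false

lemma IsTrail.reverse {u v : V} {L : List (E × Bool)} (h : G.IsTrail u v L) :
    G.IsTrail v u (L.reverse.map stepReverse) := by
  refine ⟨h.1.reverse, ?_⟩
  have : (L.reverse.map stepReverse).map Prod.fst = (L.map Prod.fst).reverse := by
    simp [stepReverse, Function.comp_def]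
  rw [this]
  exact List.nodup_reverse.mpr h.2

lemma IsTrail.rotate {w : V} {L₁ L₂ : List (E × Bool)} {s : E × Bool}
    (h : G.IsTrail w w (L₁ ++ s :: L₂)) :
    G.IsTrail (G.stepHead s) (G.stepTail s) (L₂ ++ L₁) := by
  obtain ⟨hW, hN⟩ := h
  obtain ⟨m, h₁, h₂⟩ := isWalk_append_iff.mp hW
  obtain ⟨rfl, h₃⟩ := isWalk_cons_iff.mp h₂
  refine ⟨isWalk_append_iff.mpr ⟨w, h₃, h₁⟩, ?_⟩
  rw [List.map_append, List.map_cons] at hN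
  rw [List.map_append]
  exact List.perm_append_comm.nodup_iff.mp
    (hN.sublist ((List.sublist_cons_self _ _).append_left _))

lemma IsTrail.of_append_cons {u v : V} {L₁ L₂ : List (E × Bool)} {s : E × Bool}
    (h : G.IsTrail u v (L₁ ++ s :: L₂)) :
    G.IsTrail (G.stepHead s) v L₂ ∧ s.1 ∉ L₂.map Prod.fst := by
  obtain ⟨hW, hN⟩ := h
  obtain ⟨m, -, h₂⟩ := isWalk_append_iff.mp hW
  rw [List.map_append, List.map_cons] at hN
  obtain ⟨hs, hN⟩ := List.nodup_cons.mp hN.of_append_right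
  exact ⟨⟨(isWalk_cons_iff.mp h₂).2, hN⟩, hs⟩

lemma IsTrail.cons {v : V} {L : List (E × Bool)} {s : E × Bool}
    (h : G.IsTrail (G.stepHead s) v L) (hs : s.1 ∉ L.map Prod.fst) :
    G.IsTrail (G.stepTail s) v (s :: L) :=
  ⟨isWalk_cons_iff.mpr ⟨rfl, h.1⟩, List.nodup_cons.mpr ⟨hs, h.2⟩⟩

lemma isChain_sign_alternating_iff (hG : G.IsDigraphic) (s : E × Bool) (L : List (E × Bool)) :
    List.IsChain (fun s t => G.stepHeadSign s ≠ G.stepTailSign t) (s :: L) ↔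
      ∀ t ∈ L, G.stepTailSign t = G.stepTailSign s := by
  induction L generalizing s with
  | nil => simp
  | cons t L ih =>
    have hst : G.stepHeadSign s ≠ G.stepTailSign t ↔ G.stepTailSign t = G.stepTailSign s := by
      rw [stepHeadSign_eq_not_stepTailSign hG]
      cases G.stepTailSign s <;> cases G.stepTailSign t <;> decide
    rw [List.isChain_cons_cons, ih, hst, List.forall_mem_cons]
    exact ⟨fun ⟨h, hL⟩ => ⟨h, fun x hx => (hL x hx).trans h⟩,
      fun ⟨h, hL⟩ => ⟨h, fun x hx => (hL x hx).trans h.symm⟩⟩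

lemma isABDitrail_iff (hG : G.IsDigraphic) {α : Bool} {u v : V} {L : List (E × Bool)} :
    G.IsABDitrail α (!α) u v L ↔ G.IsTrail u v L ∧ ∀ s ∈ L, G.stepTailSign s = α := by
  cases L with
  | nil =>
    exact ⟨fun h => ⟨⟨h.1.1, h.1.2.1⟩, by simp⟩,
      fun h => ⟨⟨h.1.1, h.1.2, List.isChain_nil⟩, .inl ⟨rfl, by cases α <;> decide⟩⟩⟩
  | cons s L =>
    constructor
    · rintro ⟨⟨hW, hN, hc⟩, ⟨h, -⟩ | ⟨-, hs, -⟩⟩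
      · cases h
      · have hs : G.stepTailSign s = α := hs s rfl
        refine ⟨⟨hW, hN⟩, List.forall_mem_cons.mpr ⟨hs, fun t ht => ?_⟩⟩
        exact hs ▸ (isChain_sign_alternating_iff hG s L).mp hc t ht
    · rintro ⟨⟨hW, hN⟩, hL⟩
      have hs := hL s List.mem_cons_self
      refine ⟨⟨hW, hN, (isChain_sign_alternating_iff hG s L).mpr fun t ht => ?_⟩,
        .inr ⟨List.cons_ne_nil _ _, fun t ht => Option.some.inj ht ▸ hs, fun t ht => ?_⟩⟩
      · exact (hL t (List.mem_cons_of_mem _ ht)).trans hs.symm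
      · rw [stepHeadSign_eq_not_stepTailSign hG, hL t (List.mem_of_mem_getLast? ht)]

lemma isABDitrail_false_true_iff (hG : G.IsDigraphic) {u v : V} {L : List (E × Bool)} :
    G.IsABDitrail false true u v L ↔ G.IsDirTrail u v L :=
  isABDitrail_iff hG (α := false)

lemma isDirTrail_reverse_of_isABDitrail_true_false (hG : G.IsDigraphic) {u v : V}
    {L : List (E × Bool)} (h : G.IsABDitrail true false u v L) :
    G.IsDirTrail v u (L.reverse.map stepReverse) := by
  obtain ⟨hT, hL⟩ := (isABDitrail_iff hG (α := true)).mp h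
  refine ⟨hT.reverse, fun s hs => ?_⟩
  obtain ⟨t, ht, rfl⟩ := List.mem_map.mp hs
  rw [stepTailSign_stepReverse, stepHeadSign_eq_not_stepTailSign hG,
    hL t (List.mem_reverse.mp ht), Bool.not_true]

lemma stronglyConn_iff (hG : G.IsDigraphic) {u v : V} :
    G.StronglyConn u v ↔ (∃ L, G.IsDirTrail u v L) ∧ ∃ L, G.IsDirTrail v u L := by
  simp only [StronglyConn, isABDitrail_false_true_iff hG]

lemma isCircular_iff_exists_closed_isDirTrail (hG : G.IsDigraphic) {e : E} :
    G.IsCircular e ↔ ∃ w L, G.IsDirTrail w w L ∧ G.forwardStep e ∈ L := by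
  constructor
  · rintro ⟨w, α, L, hL, d, hd⟩
    obtain ⟨L', hL', hd'⟩ : ∃ L', G.IsDirTrail w w L' ∧ ∃ d', (e, d') ∈ L' := by
      cases α with
      | false => exact ⟨L, (isABDitrail_false_true_iff hG).mp hL, d, hd⟩
      | true =>
        exact ⟨_, isDirTrail_reverse_of_isABDitrail_true_false hG hL, !d,
          List.mem_map.mpr ⟨(e, d), List.mem_reverse.mpr hd, rfl⟩⟩
    obtain ⟨d', hd'⟩ := hd'
    exact ⟨w, L', hL', (stepTailSign_eq_false_iff hG).mp (hL'.2 _ hd') ▸ hd'⟩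
  · rintro ⟨w, L, hL, he⟩
    exact ⟨w, false, L, (isABDitrail_false_true_iff hG).mpr hL, _, he⟩

lemma exists_closed_isDirTrail_iff (hG : G.IsDigraphic) {e : E} :
    (∃ w L, G.IsDirTrail w w L ∧ G.forwardStep e ∈ L) ↔
      ∃ T, G.IsDirTrail (G.stepHead (G.forwardStep e)) (G.stepTail (G.forwardStep e)) T := by
  set s := G.forwardStep e
  have hs : G.stepTailSign s = false := (stepTailSign_eq_false_iff hG).mpr rfl
  constructor
  · rintro ⟨w, L, ⟨hT, hL⟩, hsL⟩
    obtain ⟨L₁, L₂, rfl⟩ := List.append_of_mem hsL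
    exact ⟨L₂ ++ L₁, hT.rotate, fun t ht => hL t (by simp at ht ⊢; tauto)⟩
  · rintro ⟨T, hT, hTs⟩
    obtain ⟨T', ⟨hT', hTs'⟩, he⟩ :
        ∃ T', G.IsDirTrail (G.stepHead s) (G.stepTail s) T' ∧ s.1 ∉ T'.map Prod.fst := by
      by_cases he : s.1 ∈ T.map Prod.fst
      · obtain ⟨⟨e', d⟩, hd, rfl : e' = e⟩ := List.mem_map.mp he
        rw [(stepTailSign_eq_false_iff hG).mp (hTs _ hd)] at hd
        obtain ⟨T₁, T₂, rfl⟩ := List.append_of_mem hd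
        obtain ⟨hT₂, he₂⟩ := hT.of_append_cons
        exact ⟨T₂, ⟨hT₂, fun t ht => hTs t (by simp [ht])⟩, he₂⟩
      · exact ⟨T, ⟨hT, hTs⟩, he⟩
    refine ⟨G.stepTail s, s :: T', ⟨hT'.cons he, ?_⟩, List.mem_cons_self⟩
    simpa [hs] using hTs'

end BidirGraph

open BidirGraph

/-- In a digraphic bidirected graph, an edge `e` joining `u` and `v`
is circular iff `u` and `v` are strongly connected. -/
theorem digraphic_circular_iff_stronglyConn {V E : Type*} (G : BidirGraph V E)
    (hG : G.IsDigraphic) (e : E) (u v : V)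
    (he : (G.fst e = u ∧ G.snd e = v) ∨ (G.fst e = v ∧ G.snd e = u)) :
    G.IsCircular e ↔ G.StronglyConn u v := by
  set s := G.forwardStep e
  have hEdge : G.IsDirTrail (G.stepTail s) (G.stepHead s) [s] :=
    ⟨⟨isWalk_singleton s, by simp⟩, fun t ht => by
      rw [List.mem_singleton.mp ht]; exact (stepTailSign_eq_false_iff hG).mpr rfl⟩
  have hEnds :
      (G.stepTail s = u ∧ G.stepHead s = v) ∨ (G.stepTail s = v ∧ G.stepHead s = u) := by
    rcases he with h | h <;> cases hf : G.sgnFst e <;>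
      simp [s, forwardStep, stepTail, stepHead, hf, h]
  rw [isCircular_iff_exists_closed_isDirTrail hG, exists_closed_isDirTrail_iff hG,
    stronglyConn_iff hG]
  rcases hEnds with ⟨rfl, rfl⟩ | ⟨rfl, rfl⟩
  · exact ⟨fun hT => ⟨⟨_, hEdge⟩, hT⟩, And.right⟩
  · exact ⟨fun hT => ⟨hT, ⟨_, hEdge⟩⟩, And.left⟩
end

section
/- Let G be a bidirected graph, let α ∈ {+, −}, and let H be a circular component of G. Then the family { S ∈ P(G; α) : S ⊆ V(H) } is a refinement of P(H; α): every equivalence class of the relation ∼_α of G that is contained in V(H) is contained in some equivalence class of the relation ∼_α of the bidirected graph H (with the signs inherited from G). -/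
/-- The induced sub-bidirected-graph on a vertex set `C`, with inherited signs. -/
def BidirGraph.induce {V E : Type*} (G : BidirGraph V E) (C : Set V) :
    BidirGraph C {e : E // G.fst e ∈ C ∧ G.snd e ∈ C} where
  fst e := ⟨G.fst e.1, e.2.1⟩
  snd e := ⟨G.snd e.1, e.2.2⟩
  sgnFst e := G.sgnFst e.1
  sgnSnd e := G.sgnSnd e.1

namespace BidirGraph

variable {V E : Type*} {G : BidirGraph V E}

variable (G) in
inductive Walk : V → V → List (E × Bool) → Prop
  | nil (u : V) : Walk u u []
  | cons {u v : V} {s : E × Bool} {L : List (E × Bool)}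
      (h : G.stepTail s = u) (hw : Walk (G.stepHead s) v L) : Walk u v (s :: L)

theorem isWalk_iff_walk {u v : V} {L : List (E × Bool)} : G.IsWalk u v L ↔ G.Walk u v L := by
  constructor
  · intro h
    induction L generalizing u with
    | nil => rw [h.2.1 rfl]; exact .nil v
    | cons s M ih =>
      obtain ⟨hc, -, hh, hl⟩ := h
      refine .cons (hh s rfl) (ih ⟨(List.isChain_cons.mp hc).2, ?_, ?_, ?_⟩)
      · rintro rfl; exact hl s rfl
      · intro t ht; exact ((List.isChain_cons.mp hc).1 t ht).symm
      · intro t ht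
        cases M with
        | nil => simp at ht
        | cons r M => exact hl t (by rwa [List.getLast?_cons_cons])
  · intro h
    induction h with
    | nil u => exact ⟨List.isChain_nil, fun _ => rfl, by simp, by simp⟩
    | @cons u v s L h hw ih =>
      obtain ⟨hc, he, hh, hl⟩ := ih
      refine ⟨?_, by simp, fun t ht => by simp_all, ?_⟩
      · cases L with
        | nil => exact List.isChain_singleton _
        | cons t M => exact List.isChain_cons_cons.mpr ⟨(hh t rfl).symm, hc⟩
      · intro t ht
        cases L with
        | nil => simp_all
        | cons r M => exact hl t (by rwa [List.getLast?_cons_cons] at ht)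

theorem Walk.exists_suffix {a v u : V} {P : List (E × Bool)} (h : G.Walk a v P)
    (hu : u ∈ a :: P.map G.stepHead) :
    ∃ Q, G.Walk u v Q ∧ (u :: Q.map G.stepHead) <:+ (a :: P.map G.stepHead) ∧
      Q.Sublist P := by
  induction h with
  | nil b =>
    obtain rfl : u = b := by simpa using hu
    exact ⟨[], .nil u, List.suffix_refl _, List.Sublist.refl _⟩
  | @cons b v s L h hw ih =>
    rcases List.mem_cons.mp hu with rfl | hu'
    · exact ⟨s :: L, .cons h hw, List.suffix_refl _, List.Sublist.refl _⟩
    · obtain ⟨Q, hQ, hsuf, hsub⟩ := ih (by simpa using hu')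
      exact ⟨Q, hQ, hsuf.trans (List.suffix_cons _ _), hsub.trans (List.sublist_cons_self _ _)⟩

variable (G) in
def CircAdj (x y : V) : Prop :=
  ∃ q : E × Bool, G.IsCircular q.1 ∧ G.stepTail q = x ∧ G.stepHead q = y

theorem stepTail_flip (q : E × Bool) : G.stepTail (q.1, !q.2) = G.stepHead q := by
  obtain ⟨e, d⟩ := q; cases d <;> rfl

theorem stepHead_flip (q : E × Bool) : G.stepHead (q.1, !q.2) = G.stepTail q := by
  obtain ⟨e, d⟩ := q; cases d <;> rfl

instance : Std.Symm G.CircAdj where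
  symm _ _ := fun ⟨q, hq, hx, hy⟩ => ⟨(q.1, !q.2), hq, by rw [stepTail_flip, hy],
    by rw [stepHead_flip, hx]⟩

theorem Walk.reflTransGen_circAdj {u v : V} {L : List (E × Bool)} (h : G.Walk u v L)
    (hc : ∀ q ∈ L, G.IsCircular q.1) : Relation.ReflTransGen G.CircAdj u v := by
  induction h with
  | nil => exact .refl
  | @cons u v s L h hw ih =>
    exact .head ⟨s, hc s List.mem_cons_self, h, rfl⟩
      (ih fun q hq => hc q (List.mem_cons_of_mem _ hq))

theorem Walk.reflTransGen_stepTail {u v : V} {L : List (E × Bool)} (h : G.Walk u v L)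
    (hc : ∀ q ∈ L, G.IsCircular q.1) :
    ∀ q ∈ L, Relation.ReflTransGen G.CircAdj u (G.stepTail q) := by
  induction h with
  | nil => simp
  | @cons u v s L h hw ih =>
    intro q hq
    rcases List.mem_cons.mp hq with rfl | hq
    · rw [h]
    · exact .head ⟨s, hc s List.mem_cons_self, h, rfl⟩
        (ih (fun p hp => hc p (List.mem_cons_of_mem _ hp)) q hq)

/-- A circular walk is shortened to a path by cutting out closed sub-walks. -/
theorem circConn_iff_reflTransGen {u v : V} :
    G.CircConn u v ↔ Relation.ReflTransGen G.CircAdj u v := by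
  refine ⟨fun ⟨L, hw, _, hc⟩ => (isWalk_iff_walk.mp hw).reflTransGen_circAdj hc, fun h => ?_⟩
  suffices ∃ L, G.Walk u v L ∧ (u :: L.map G.stepHead).Nodup ∧ ∀ q ∈ L, G.IsCircular q.1 by
    obtain ⟨L, hw, hnd, hc⟩ := this
    exact ⟨L, isWalk_iff_walk.mpr hw, hnd, hc⟩
  induction h using Relation.ReflTransGen.head_induction_on with
  | refl => exact ⟨[], .nil v, by simp, by simp⟩
  | @head a c hac _ ih =>
    obtain ⟨q, hq, rfl, rfl⟩ := hac
    obtain ⟨P, hP, hnd, hc⟩ := ih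
    by_cases ha : G.stepTail q ∈ G.stepHead q :: P.map G.stepHead
    · obtain ⟨Q, hQ, hsuf, hsub⟩ := hP.exists_suffix ha
      exact ⟨Q, hQ, hsuf.sublist.nodup hnd, fun p hp => hc p (hsub.mem hp)⟩
    · refine ⟨q :: P, .cons rfl hP, List.nodup_cons.mpr ⟨ha, hnd⟩, ?_⟩
      rintro p (_ | ⟨_, hp⟩)
      exacts [hq, hc p hp]

section Induce

variable {C : Set V}

def liftStep (q : {e : E // G.fst e ∈ C ∧ G.snd e ∈ C} × Bool) : E × Bool := (q.1.1, q.2)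

theorem val_stepTail_induce (q : {e : E // G.fst e ∈ C ∧ G.snd e ∈ C} × Bool) :
    ((G.induce C).stepTail q).1 = G.stepTail (liftStep q) := by
  obtain ⟨e, d⟩ := q; cases d <;> rfl

theorem val_stepHead_induce (q : {e : E // G.fst e ∈ C ∧ G.snd e ∈ C} × Bool) :
    ((G.induce C).stepHead q).1 = G.stepHead (liftStep q) := by
  obtain ⟨e, d⟩ := q; cases d <;> rfl

theorem stepTailSign_induce (q : {e : E // G.fst e ∈ C ∧ G.snd e ∈ C} × Bool) :
    (G.induce C).stepTailSign q = G.stepTailSign (liftStep q) := by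
  obtain ⟨e, d⟩ := q; cases d <;> rfl

theorem stepHeadSign_induce (q : {e : E // G.fst e ∈ C ∧ G.snd e ∈ C} × Bool) :
    (G.induce C).stepHeadSign q = G.stepHeadSign (liftStep q) := by
  obtain ⟨e, d⟩ := q; cases d <;> rfl

theorem isWalk_induce_iff {u v : C} {L : List ({e : E // G.fst e ∈ C ∧ G.snd e ∈ C} × Bool)} :
    (G.induce C).IsWalk u v L ↔ G.IsWalk u.1 v.1 (L.map liftStep) := by
  simp only [IsWalk, List.Chain', List.isChain_map, List.map_eq_nil_iff, List.head?_map,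
    List.getLast?_map, Subtype.ext_iff, val_stepTail_induce, val_stepHead_induce, ← Option.mem_def,
    Option.forall_mem_map]

theorem isABDitrail_induce_iff {α β : Bool} {u v : C}
    {L : List ({e : E // G.fst e ∈ C ∧ G.snd e ∈ C} × Bool)} :
    (G.induce C).IsABDitrail α β u v L ↔ G.IsABDitrail α β u.1 v.1 (L.map liftStep) := by
  have hnodup : ((L.map liftStep).map Prod.fst).Nodup ↔ (L.map Prod.fst).Nodup := by
    rw [List.map_map, ← List.nodup_map_iff Subtype.val_injective, List.map_map]; rfl
  simp only [IsABDitrail, IsDitrail, isWalk_induce_iff, hnodup, List.Chain', List.isChain_map,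
    List.map_eq_nil_iff, List.head?_map, List.getLast?_map, stepTailSign_induce,
    stepHeadSign_induce, ne_eq, ← Option.mem_def, Option.forall_mem_map]

theorem liftStep_injective :
    Function.Injective (liftStep : {e : E // G.fst e ∈ C ∧ G.snd e ∈ C} × Bool → E × Bool) :=
  fun ⟨_, _⟩ ⟨_, _⟩ h => by simp_all [liftStep, Subtype.ext_iff]

theorem exists_map_liftStep_eq {L : List (E × Bool)}
    (h : ∀ q ∈ L, G.fst q.1 ∈ C ∧ G.snd q.1 ∈ C) :
    ∃ L' : List ({e : E // G.fst e ∈ C ∧ G.snd e ∈ C} × Bool), L'.map liftStep = L :=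
  ⟨L.pmap (fun q hq => (⟨q.1, hq⟩, q.2)) h, by simp [List.map_pmap, liftStep]⟩

theorem fst_mem_and_snd_mem_iff (q : E × Bool) :
    G.fst q.1 ∈ C ∧ G.snd q.1 ∈ C ↔ G.stepTail q ∈ C ∧ G.stepHead q ∈ C := by
  obtain ⟨e, d⟩ := q; cases d
  exacts [and_comm, Iff.rfl]

section Component

variable {v₀ : V}

theorem mem_of_reflTransGen (hC : C = {u | G.CircConn u v₀}) {x y : V} (hx : x ∈ C)
    (h : Relation.ReflTransGen G.CircAdj x y) : y ∈ C := by
  subst hC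
  exact circConn_iff_reflTransGen.mpr ((Std.Symm.symm _ _ h).trans
    (circConn_iff_reflTransGen.mp hx))

theorem Walk.ends_mem (hC : C = {u | G.CircConn u v₀}) {u v : V} {L : List (E × Bool)}
    (h : G.Walk u v L) (hc : ∀ q ∈ L, G.IsCircular q.1) (hu : u ∈ C) :
    ∀ q ∈ L, G.fst q.1 ∈ C ∧ G.snd q.1 ∈ C := by
  intro q hq
  have htail : G.stepTail q ∈ C := mem_of_reflTransGen hC hu (h.reflTransGen_stepTail hc q hq)
  exact (fst_mem_and_snd_mem_iff q).mpr
    ⟨htail, mem_of_reflTransGen hC htail (.single ⟨q, hc q hq, rfl, rfl⟩)⟩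

/-- A cyclic ditrail through an edge of the component stays inside the component, since all
its edges are circular. -/
theorem isCircular_induce (hC : C = {u | G.CircConn u v₀})
    (e : {e : E // G.fst e ∈ C ∧ G.snd e ∈ C}) (h : G.IsCircular e.1) :
    (G.induce C).IsCircular e := by
  obtain ⟨x, a, M, hM, d, hdM⟩ := h
  have hw : G.Walk x x M := isWalk_iff_walk.mp hM.1.1
  have hc : ∀ q ∈ M, G.IsCircular q.1 := fun q hq => ⟨x, a, M, hM, q.2, hq⟩
  have hx : x ∈ C :=
    mem_of_reflTransGen hC ((fst_mem_and_snd_mem_iff (e.1, d)).mp e.2).1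
      (Std.Symm.symm _ _ (hw.reflTransGen_stepTail hc _ hdM))
  obtain ⟨M', rfl⟩ := exists_map_liftStep_eq (hw.ends_mem hC hc hx)
  exact ⟨⟨x, hx⟩, a, M', isABDitrail_induce_iff.mpr hM, d,
    (List.mem_map_of_injective liftStep_injective).mp hdM⟩

theorem circConn_induce (hC : C = {u | G.CircConn u v₀}) {u w : V} (hu : u ∈ C) (hw : w ∈ C)
    (h : G.CircConn u w) : (G.induce C).CircConn ⟨u, hu⟩ ⟨w, hw⟩ := by
  obtain ⟨L, hL, hnd, hc⟩ := h
  obtain ⟨L', rfl⟩ := exists_map_liftStep_eq ((isWalk_iff_walk.mp hL).ends_mem hC hc hu)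
  refine ⟨L', isWalk_induce_iff.mpr hL, List.Nodup.of_map Subtype.val ?_,
    fun p hp => isCircular_induce hC p.1 (hc _ (List.mem_map_of_mem hp))⟩
  simpa [List.map_map, Function.comp_def, val_stepHead_induce] using hnd

theorem SimRel.induce (hC : C = {u | G.CircConn u v₀}) {α : Bool} {u w : V} (hu : u ∈ C)
    (hw : w ∈ C) (h : G.SimRel α u w) : (G.induce C).SimRel α ⟨u, hu⟩ ⟨w, hw⟩ := by
  rcases h with rfl | ⟨hconn, hno⟩
  · exact .inl rfl
  refine .inr ⟨circConn_induce hC hu hw hconn, fun ⟨L, hL⟩ => hno ⟨L.map liftStep, ?_⟩⟩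
  simpa only [isABDitrail_induce_iff] using hL

end Component

end Induce

end BidirGraph

/-- Let `C` be the vertex set of a circular component `H` of `G`.
Every `∼_α`-class of `G` that is contained in `C` is contained in some `∼_α`-class of
the bidirected graph `H` (the induced subgraph on `C` with inherited signs); i.e., the
family of classes of `G` inside `C` refines the decomposition of `H`. -/
theorem simRel_classes_refine_component {V E : Type*} (G : BidirGraph V E) (α : Bool)
    (C : Set V) (hC : G.IsCircComponent C) (v : V)
    (hv : {u | G.SimRel α u v} ⊆ C) :
    ∃ w : C, ∀ (u : V) (hu : G.SimRel α u v),
      (G.induce C).SimRel α ⟨u, hv hu⟩ w := by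
  obtain ⟨v₀, hC⟩ := hC
  exact ⟨⟨v, hv (Or.inl rfl)⟩, fun u hu => hu.induce hC _ _⟩
end

section
/- Let G be a b-factorizable graph, where b : V(G) → ℤ≥0, let M be a b-factor of G, and let α ∈ {+, −}. Then for all vertices u, v of G, u ∼_{b,α} v holds in G if and only if u ∼_α v holds in the bidirected graph G^M. -/
variable {V : Type*} [Fintype V] [DecidableEq V]

/-- `M` is a `b`-factor of `G`: a set of edges of `G` such that every vertex `v` is
incident with exactly `b v` edges of `M`. (Stated with integer-valued `b` so that
functions like `b - χ_u - χ_v` can be used without truncation.) -/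
def SimpleGraph.IsBFactor (G : SimpleGraph V) (b : V → ℤ) (M : Finset (Sym2 V)) : Prop :=
  ↑M ⊆ G.edgeSet ∧ ∀ v : V, ((M.filter (fun e => v ∈ e)).card : ℤ) = b v

/-- An edge is `b`-flexible if some `b`-factor contains it and some `b`-factor
avoids it. -/
def SimpleGraph.IsBFlexible (G : SimpleGraph V) (b : V → ℕ) (e : Sym2 V) : Prop :=
  (∃ M, G.IsBFactor (fun w => (b w : ℤ)) M ∧ e ∈ M) ∧
  (∃ M, G.IsBFactor (fun w => (b w : ℤ)) M ∧ e ∉ M)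

/-- Two vertices are `b`-flexibly connected if there is a path between them all of
whose edges are `b`-flexible. -/
def SimpleGraph.BFlexConn (G : SimpleGraph V) (b : V → ℕ) (u v : V) : Prop :=
  ∃ p : G.Walk u v, p.IsPath ∧ ∀ e ∈ p.edges, G.IsBFlexible b e

/-- The relation `∼_{b,α}` (`α = true` is `+`, `α = false` is `-`): `u ∼_{b,α} v` iff
`u = v`, or `u` and `v` are `b`-flexibly connected and `G` has no
`(b + χ_u + χ_v)`-factor (for `α = +`), resp. no `(b - χ_u - χ_v)`-factor
(for `α = -`). -/
def SimpleGraph.BSim (G : SimpleGraph V) (b : V → ℕ) (α : Bool) (u v : V) : Prop :=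
  u = v ∨ (G.BFlexConn b u v ∧
    ¬ ∃ M, G.IsBFactor
      (fun w => (b w : ℤ) + (if α then 1 else -1) *
        ((if w = u then 1 else 0) + (if w = v then 1 else 0))) M)

/-- The bidirected graph `G^M`: the edges of `G`, where both ends of every edge in `M`
get sign `-` (= `false`) and both ends of every edge not in `M` get sign `+`
(= `true`). -/
noncomputable def SimpleGraph.toBidir (G : SimpleGraph V) (M : Finset (Sym2 V)) :
    BidirGraph V G.edgeSet where
  fst e := (Quot.out e.1).1
  snd e := (Quot.out e.1).2
  sgnFst e := if e.1 ∈ M then false else true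
  sgnSnd e := if e.1 ∈ M then false else true

namespace BidirGraph

variable {V E : Type*} (G : BidirGraph V E) {x y : V} {s : E × Bool} {L : List (E × Bool)}

theorem isWalk_iff : G.IsWalk x y L ↔ L.IsChain (fun s t => G.stepHead s = G.stepTail t) ∧
    (L = [] → x = y) ∧ (∀ s ∈ L.head?, G.stepTail s = x) ∧ (∀ s ∈ L.getLast?, G.stepHead s = y) :=
  Iff.rfl

theorem isDitrail_iff : G.IsDitrail x y L ↔ G.IsWalk x y L ∧ (L.map Prod.fst).Nodup ∧
    L.IsChain (fun s t => G.stepHeadSign s ≠ G.stepTailSign t) :=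
  Iff.rfl

theorem isWalk_nil_iff : G.IsWalk x y [] ↔ x = y := by
  simp [isWalk_iff]

theorem isWalk_cons_iff_s11 :
    G.IsWalk x y (s :: L) ↔ G.stepTail s = x ∧ G.IsWalk (G.stepHead s) y L := by
  cases L with
  | nil => simp [isWalk_iff, eq_comm]
  | cons t L =>
    simp only [isWalk_iff, List.isChain_cons, List.head?_cons, List.getLast?_cons_cons,
      Option.mem_def, Option.some.injEq, forall_eq', reduceCtorEq, IsEmpty.forall_iff, true_and]
    tauto

theorem isDitrail_nil_iff : G.IsDitrail x y [] ↔ x = y := by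
  simp [isDitrail_iff, isWalk_nil_iff]

theorem isDitrail_cons_iff :
    G.IsDitrail x y (s :: L) ↔ G.stepTail s = x ∧ s.1 ∉ L.map Prod.fst ∧
      (∀ t ∈ L.head?, G.stepHeadSign s ≠ G.stepTailSign t) ∧ G.IsDitrail (G.stepHead s) y L := by
  simp only [isDitrail_iff, isWalk_cons_iff_s11, List.map_cons, List.nodup_cons, List.isChain_cons]
  tauto

theorem isABDitrail_iff_of_ne_nil {β γ : Bool} (hL : L ≠ []) :
    G.IsABDitrail β γ x y L ↔ G.IsDitrail x y L ∧ (∀ t ∈ L.head?, G.stepTailSign t = β) ∧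
      (∀ t ∈ L.getLast?, G.stepHeadSign t = γ) := by
  simp [IsABDitrail, hL]

theorem isABDitrail_singleton_iff {β γ : Bool} :
    G.IsABDitrail β γ x y [s] ↔ G.stepTail s = x ∧ G.stepHead s = y ∧
      G.stepTailSign s = β ∧ G.stepHeadSign s = γ := by
  simp [isABDitrail_iff_of_ne_nil _ (List.cons_ne_nil _ _), isDitrail_cons_iff, isDitrail_nil_iff,
    and_assoc]

theorem isABDitrail_cons_iff {β γ : Bool} (hL : L ≠ []) :
    G.IsABDitrail β γ x y (s :: L) ↔ G.stepTail s = x ∧ G.stepTailSign s = β ∧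
      s.1 ∉ L.map Prod.fst ∧ G.IsABDitrail (!G.stepHeadSign s) γ (G.stepHead s) y L := by
  obtain ⟨t, L, rfl⟩ := List.exists_cons_of_ne_nil hL
  simp only [isABDitrail_iff_of_ne_nil _ hL, isABDitrail_iff_of_ne_nil _ (List.cons_ne_nil _ _),
    isDitrail_cons_iff, List.head?_cons, List.getLast?_cons_cons, Option.mem_def,
    Option.some.injEq, forall_eq', ne_comm (a := G.stepHeadSign s), ← Bool.eq_not_iff]
  tauto

end BidirGraph

def Bool.toSign (α : Bool) : ℤ := if α then 1 else -1

@[simp] theorem Bool.toSign_not (α : Bool) : (!α).toSign = -α.toSign := by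
  cases α <;> simp [Bool.toSign]

@[simp] theorem Bool.toSign_mul_self (α : Bool) : α.toSign * α.toSign = 1 := by
  cases α <;> simp [Bool.toSign]

namespace SimpleGraph

variable {V : Type*} [DecidableEq V]

theorem ite_mem_eq_of_eq_mk {e : Sym2 V} {x y w : V} (he : e = s(x, y)) (hxy : x ≠ y) (c : ℤ) :
    (if w ∈ e then c else 0) = c * (if w = x then 1 else 0) + c * (if w = y then 1 else 0) := by
  subst he
  by_cases hx : w = x <;> by_cases hy : w = y <;> simp_all

/-- The change of the `M`-degree of `w` when the edges of `S` are toggled. -/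
def imbalance (M S : Finset (Sym2 V)) (w : V) : ℤ :=
  ∑ e ∈ S with w ∈ e, (decide (e ∉ M)).toSign

theorem card_filter_symmDiff (M S : Finset (Sym2 V)) (w : V) :
    (((symmDiff M S).filter (w ∈ ·)).card : ℤ) =
      (M.filter (w ∈ ·)).card + imbalance M S w := by
  have sum_eq : ∀ X ⊆ M ∪ S, ∀ f : Sym2 V → ℤ,
      ∑ e ∈ X, f e = ∑ e ∈ M ∪ S, if e ∈ X then f e else 0 := by
    intro X hX f
    rw [Finset.sum_ite_mem, Finset.inter_eq_right.mpr hX]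
  simp only [Finset.card_filter, Nat.cast_sum, Nat.cast_ite, Nat.cast_one, Nat.cast_zero,
    imbalance, Finset.sum_filter]
  rw [sum_eq _ (symmDiff_le_sup (a := M) (b := S)), sum_eq M Finset.subset_union_left,
    sum_eq S Finset.subset_union_right, ← Finset.sum_add_distrib]
  refine Finset.sum_congr rfl fun e _ => ?_
  by_cases heM : e ∈ M <;> by_cases heS : e ∈ S <;> by_cases hw : w ∈ e <;>
    simp [heM, heS, hw, Finset.mem_symmDiff, Bool.toSign]

@[simp] theorem imbalance_empty (M : Finset (Sym2 V)) (w : V) : imbalance M ∅ w = 0 := rfl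

theorem imbalance_insert (M : Finset (Sym2 V)) {S : Finset (Sym2 V)} {e : Sym2 V} (he : e ∉ S)
    (w : V) : imbalance M (insert e S) w =
      (if w ∈ e then (decide (e ∉ M)).toSign else 0) + imbalance M S w := by
  rw [imbalance, Finset.filter_insert]
  split_ifs with hw
  · rw [Finset.sum_insert (by simp [he]), imbalance]
  · rw [zero_add, imbalance]

theorem imbalance_erase (M : Finset (Sym2 V)) {S : Finset (Sym2 V)} {e : Sym2 V} (he : e ∈ S)
    (w : V) : imbalance M (S.erase e) w =
      imbalance M S w - (if w ∈ e then (decide (e ∉ M)).toSign else 0) := by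
  rw [← Finset.insert_erase he, imbalance_insert M (Finset.notMem_erase e S),
    Finset.erase_insert (Finset.notMem_erase e S)]
  ring

theorem exists_mem_of_toSign_mul_imbalance_pos {M S : Finset (Sym2 V)} {x : V} {β : Bool}
    (h : 0 < β.toSign * imbalance M S x) : ∃ e ∈ S, x ∈ e ∧ decide (e ∉ M) = β := by
  by_contra! hne
  refine h.not_ge ?_
  rw [imbalance, Finset.mul_sum]
  refine Finset.sum_nonpos fun e he => ?_
  rw [Finset.mem_filter] at he
  rw [Bool.eq_not_iff.mpr (hne e he.1 he.2), Bool.toSign_not]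
  cases β <;> simp [Bool.toSign]

section Factor

variable {G : SimpleGraph V} {b c : V → ℤ} {M N S : Finset (Sym2 V)}

theorem coe_symmDiff_subset_edgeSet (hM : ↑M ⊆ G.edgeSet) (hS : ↑S ⊆ G.edgeSet) :
    ↑(symmDiff M S) ⊆ G.edgeSet := by
  rw [Finset.coe_symmDiff]
  exact symmDiff_le_sup.trans (sup_le hM hS)

theorem isBFactor_symmDiff (hM : G.IsBFactor b M) (hS : ↑S ⊆ G.edgeSet) :
    G.IsBFactor (fun w => b w + imbalance M S w) (symmDiff M S) :=
  ⟨coe_symmDiff_subset_edgeSet hM.1 hS, fun w => by rw [card_filter_symmDiff, hM.2 w]⟩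

theorem imbalance_symmDiff_of_isBFactor (hM : G.IsBFactor b M) (hN : G.IsBFactor c N) (w : V) :
    imbalance M (symmDiff M N) w = c w - b w := by
  have h := card_filter_symmDiff M (symmDiff M N) w
  rw [symmDiff_symmDiff_cancel_left, hM.2 w, hN.2 w] at h
  omega

end Factor

section ToBidir

variable {G : SimpleGraph V} {M N : Finset (Sym2 V)}

open BidirGraph

theorem toBidir_stepTailSign (s : G.edgeSet × Bool) :
    (G.toBidir M).stepTailSign s = decide (↑s.1 ∉ M) := by
  by_cases h : ↑s.1 ∈ M <;> cases s.2 <;> simp [stepTailSign, toBidir, h]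

theorem toBidir_stepHeadSign (s : G.edgeSet × Bool) :
    (G.toBidir M).stepHeadSign s = decide (↑s.1 ∉ M) := by
  by_cases h : ↑s.1 ∈ M <;> cases s.2 <;> simp [stepHeadSign, toBidir, h]

theorem mk_toBidir_stepTail_stepHead (s : G.edgeSet × Bool) :
    s((G.toBidir M).stepTail s, (G.toBidir M).stepHead s) = s.1 := by
  obtain ⟨e, _ | _⟩ := s
  · exact Sym2.eq_swap.trans (Quot.out_eq _)
  · exact Quot.out_eq _

theorem exists_toBidir_step (e : G.edgeSet) {x y : V} (he : (e : Sym2 V) = s(x, y)) :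
    ∃ d, (G.toBidir M).stepTail (e, d) = x ∧ (G.toBidir M).stepHead (e, d) = y := by
  have h := mk_toBidir_stepTail_stepHead (M := M) (e, true)
  rw [he, Sym2.eq_iff] at h
  rcases h with ⟨h1, h2⟩ | ⟨h1, h2⟩
  · exact ⟨true, h1, h2⟩
  · exact ⟨false, h2, h1⟩

theorem toBidir_adj_stepTail_stepHead (s : G.edgeSet × Bool) :
    G.Adj ((G.toBidir M).stepTail s) ((G.toBidir M).stepHead s) :=
  G.mem_edgeSet.mp (mk_toBidir_stepTail_stepHead (M := M) s ▸ s.1.2)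

def trailEdges (L : List (G.edgeSet × Bool)) : Finset (Sym2 V) :=
  (L.map fun s => (s.1 : Sym2 V)).toFinset

theorem coe_notMem_trailEdges {s : G.edgeSet × Bool} {L : List (G.edgeSet × Bool)}
    (h : s.1 ∉ L.map Prod.fst) : (s.1 : Sym2 V) ∉ trailEdges L := by
  simpa [trailEdges, Subtype.ext_iff] using h

@[simp] theorem trailEdges_nil : trailEdges ([] : List (G.edgeSet × Bool)) = ∅ := rfl

theorem trailEdges_cons (s : G.edgeSet × Bool) (L : List (G.edgeSet × Bool)) :
    trailEdges (s :: L) = insert ↑s.1 (trailEdges L) := by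
  simp [trailEdges]

theorem trailEdges_subset_edgeSet (L : List (G.edgeSet × Bool)) : ↑(trailEdges L) ⊆ G.edgeSet := by
  intro e
  simp only [trailEdges, List.coe_toFinset, List.mem_map]
  rintro ⟨s, -, rfl⟩
  exact s.1.2

theorem imbalance_trailEdges {β γ : Bool} {x y : V} {L : List (G.edgeSet × Bool)}
    (h : (G.toBidir M).IsABDitrail β γ x y L) (hL : L ≠ []) (w : V) :
    imbalance M (trailEdges L) w =
      β.toSign * (if w = x then 1 else 0) + γ.toSign * (if w = y then 1 else 0) := by
  induction L generalizing x β with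
  | nil => exact absurd rfl hL
  | cons s L ih =>
    have hxy := (toBidir_adj_stepTail_stepHead (M := M) s).ne
    have hedge := mk_toBidir_stepTail_stepHead (M := M) s
    rcases eq_or_ne L [] with rfl | hL'
    · obtain ⟨rfl, rfl, rfl, rfl⟩ := (isABDitrail_singleton_iff _).1 h
      rw [trailEdges_cons, trailEdges_nil, imbalance_insert M (Finset.notMem_empty _),
        imbalance_empty, ite_mem_eq_of_eq_mk hedge.symm hxy, toBidir_stepHeadSign,
        toBidir_stepTailSign]
      ring
    · obtain ⟨rfl, rfl, hs, hrest⟩ := (isABDitrail_cons_iff _ hL').1 h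
      rw [trailEdges_cons, imbalance_insert M (coe_notMem_trailEdges hs), ih hrest hL',
        ite_mem_eq_of_eq_mk hedge.symm hxy, toBidir_stepHeadSign, toBidir_stepTailSign,
        Bool.toSign_not]
      ring

theorem isABDitrail_toBidir_cons {s : G.edgeSet × Bool} {L : List (G.edgeSet × Bool)}
    {β γ : Bool} {y : V} (hs : decide (↑s.1 ∉ M) = β) (hL : L ≠ [])
    (hne : ∀ t ∈ L, (t.1 : Sym2 V) ≠ s.1)
    (h : (G.toBidir M).IsABDitrail (!β) γ ((G.toBidir M).stepHead s) y L) :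
    (G.toBidir M).IsABDitrail β γ ((G.toBidir M).stepTail s) y (s :: L) := by
  refine (isABDitrail_cons_iff _ hL).2 ⟨rfl, (toBidir_stepTailSign s).trans hs, fun hmem => ?_, ?_⟩
  · obtain ⟨t, ht, hts⟩ := List.mem_map.1 hmem
    exact hne t ht (congrArg Subtype.val hts)
  · rwa [toBidir_stepHeadSign, hs]

/-- Leave `x` along an edge of `D` of sign `β`, which exists since the imbalance at `x` has sign
`β`; removing that edge moves this charge to its other end with the opposite sign. -/
theorem exists_isABDitrail_of_imbalance {D : Finset (Sym2 V)} (hD : ↑D ⊆ G.edgeSet)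
    {β γ : Bool} {x y : V} (hxy : x ≠ y ∨ β = γ)
    (himb : ∀ w, imbalance M D w =
      β.toSign * (if w = x then 1 else 0) + γ.toSign * (if w = y then 1 else 0)) :
    ∃ L ≠ [], (G.toBidir M).IsABDitrail β γ x y L ∧ ∀ s ∈ L, ↑s.1 ∈ D := by
  induction D using Finset.strongInduction generalizing x β with
  | H D ih =>
  have hpos : 0 < β.toSign * imbalance M D x := by
    rcases hxy with hxy | rfl
    · simp [himb, hxy]
    · by_cases hxy : x = y <;> simp [himb, hxy, mul_add]
  obtain ⟨e, heD, hxe, hβ⟩ := exists_mem_of_toSign_mul_imbalance_pos hpos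
  obtain ⟨z, rfl⟩ := Sym2.mem_iff_exists.mp hxe
  obtain ⟨d, htail, hhead⟩ := exists_toBidir_step (M := M) ⟨_, hD heD⟩ rfl
  set s : G.edgeSet × Bool := (⟨_, hD heD⟩, d)
  have hxz : x ≠ z := htail ▸ hhead ▸ (toBidir_adj_stepTail_stepHead s).ne
  by_cases hstop : z = y ∧ β = γ
  · obtain ⟨rfl, rfl⟩ := hstop
    refine ⟨[s], List.cons_ne_nil _ _, ?_, by simpa [s] using heD⟩
    exact (isABDitrail_singleton_iff _).2 ⟨htail, hhead, (toBidir_stepTailSign s).trans hβ,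
      (toBidir_stepHeadSign s).trans hβ⟩
  have hzy : z ≠ y ∨ (!β) = γ := by
    by_cases hzy : z = y
    · exact .inr (Bool.not_eq_iff.2 fun h => hstop ⟨hzy, h⟩)
    · exact .inl hzy
  have himb' : ∀ w, imbalance M (D.erase s(x, z)) w =
      (!β).toSign * (if w = z then 1 else 0) + γ.toSign * (if w = y then 1 else 0) := by
    intro w
    rw [imbalance_erase M heD, himb, hβ, ite_mem_eq_of_eq_mk rfl hxz, Bool.toSign_not]
    ring
  obtain ⟨L, hL, hLd, hLD⟩ := ih _ (Finset.erase_ssubset heD)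
    (fun e he => hD (Finset.mem_of_mem_erase he)) hzy himb'
  refine ⟨s :: L, List.cons_ne_nil _ _, htail ▸ isABDitrail_toBidir_cons hβ hL
    (fun t ht => Finset.ne_of_mem_erase (hLD t ht)) (hhead ▸ hLd), ?_⟩
  simpa [s, heD] using fun t ht => Finset.mem_of_mem_erase (hLD t ht)

theorem isBFactor_symmDiff_trailEdges {b : V → ℤ} (hM : G.IsBFactor b M) {β γ : Bool} {x y : V}
    {L : List (G.edgeSet × Bool)} (h : (G.toBidir M).IsABDitrail β γ x y L) (hL : L ≠ []) :
    G.IsBFactor (fun w => b w + (β.toSign * (if w = x then 1 else 0) +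
      γ.toSign * (if w = y then 1 else 0))) (symmDiff M (trailEdges L)) := by
  simpa only [imbalance_trailEdges h hL] using isBFactor_symmDiff hM (trailEdges_subset_edgeSet L)

theorem exists_isBFactor_iff_exists_isABDitrail {b : V → ℤ} (hM : G.IsBFactor b M) (α : Bool)
    {u v : V} (huv : u ≠ v) :
    (∃ N, G.IsBFactor
      (fun w => b w + α.toSign * ((if w = u then 1 else 0) + (if w = v then 1 else 0))) N) ↔
    ∃ L, (G.toBidir M).IsABDitrail α α u v L := by
  simp only [mul_add]
  constructor
  · rintro ⟨N, hN⟩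
    obtain ⟨L, -, hL, -⟩ := exists_isABDitrail_of_imbalance (coe_symmDiff_subset_edgeSet hM.1 hN.1)
      (.inl huv) fun w => (imbalance_symmDiff_of_isBFactor hM hN w).trans (add_sub_cancel_left _ _)
    exact ⟨L, hL⟩
  · rintro ⟨L, hL⟩
    have hne : L ≠ [] := by
      rintro rfl
      simpa [IsABDitrail] using hL.2
    exact ⟨_, isBFactor_symmDiff_trailEdges hM hL hne⟩

theorem isBFlexible_of_mem_symmDiff {b : V → ℕ}
    (hM : G.IsBFactor (fun w => (b w : ℤ)) M) (hN : G.IsBFactor (fun w => (b w : ℤ)) N)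
    {e : Sym2 V} (he : e ∈ symmDiff M N) : G.IsBFlexible b e := by
  rcases Finset.mem_symmDiff.1 he with ⟨heM, heN⟩ | ⟨heN, heM⟩
  · exact ⟨⟨M, hM, heM⟩, ⟨N, hN, heN⟩⟩
  · exact ⟨⟨N, hN, heN⟩, ⟨M, hM, heM⟩⟩

theorem IsBFlexible.exists_mem_symmDiff {b : V → ℕ} {e : Sym2 V} (h : G.IsBFlexible b e)
    (M : Finset (Sym2 V)) : ∃ N, G.IsBFactor (fun w => (b w : ℤ)) N ∧ e ∈ symmDiff M N := by
  obtain ⟨⟨N₁, hN₁, heN₁⟩, ⟨N₂, hN₂, heN₂⟩⟩ := h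
  by_cases heM : e ∈ M
  · exact ⟨N₂, hN₂, Finset.mem_symmDiff.2 (.inl ⟨heM, heN₂⟩)⟩
  · exact ⟨N₁, hN₁, Finset.mem_symmDiff.2 (.inr ⟨heN₁, heM⟩)⟩

/-- The edge `e`, followed by a greedy ditrail back through the rest of `symmDiff M N`, closes
up into a cyclic ditrail. -/
theorem isCircular_toBidir_of_mem_symmDiff {b : V → ℤ} (hM : G.IsBFactor b M)
    (hN : G.IsBFactor b N) (e : G.edgeSet) (he : ↑e ∈ symmDiff M N) :
    (G.toBidir M).IsCircular e := by
  set s : G.edgeSet × Bool := (e, true)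
  set σ := decide (↑e ∉ M)
  have hxy := (toBidir_adj_stepTail_stepHead (M := M) s).ne
  have himb : ∀ w, imbalance M ((symmDiff M N).erase e) w =
      (!σ).toSign * (if w = (G.toBidir M).stepHead s then 1 else 0) +
        (!σ).toSign * (if w = (G.toBidir M).stepTail s then 1 else 0) := by
    intro w
    rw [imbalance_erase M he, imbalance_symmDiff_of_isBFactor hM hN, sub_self,
      ite_mem_eq_of_eq_mk (mk_toBidir_stepTail_stepHead s).symm hxy, Bool.toSign_not]
    ring
  obtain ⟨L, hL, hLd, hLD⟩ := exists_isABDitrail_of_imbalance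
    (coe_symmDiff_subset_edgeSet hM.1 hN.1 |>.trans' fun _ => Finset.mem_of_mem_erase)
    (.inr rfl) himb
  exact ⟨_, σ, s :: L, isABDitrail_toBidir_cons rfl hL
    (fun t ht => Finset.ne_of_mem_erase (hLD t ht)) hLd, true, List.mem_cons_self⟩

theorem exists_mem_symmDiff_of_isCircular_toBidir {b : V → ℤ} (hM : G.IsBFactor b M)
    {e : G.edgeSet} (h : (G.toBidir M).IsCircular e) :
    ∃ N, G.IsBFactor b N ∧ ↑e ∈ symmDiff M N := by
  obtain ⟨v, α, L, hL, d, he⟩ := h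
  have hne : L ≠ [] := List.ne_nil_of_mem he
  refine ⟨symmDiff M (trailEdges L), ?_, ?_⟩
  · convert isBFactor_symmDiff_trailEdges hM hL hne using 2 with w
    rw [Bool.toSign_not]
    ring
  · rw [symmDiff_symmDiff_cancel_left, trailEdges, List.mem_toFinset]
    exact List.mem_map_of_mem (f := fun s => (s.1 : Sym2 V)) he

theorem isBFlexible_iff_isCircular_toBidir {b : V → ℕ} (hM : G.IsBFactor (fun w => (b w : ℤ)) M)
    (e : G.edgeSet) : G.IsBFlexible b e ↔ (G.toBidir M).IsCircular e := by
  constructor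
  · intro h
    obtain ⟨N, hN, he⟩ := h.exists_mem_symmDiff M
    exact isCircular_toBidir_of_mem_symmDiff hM hN e he
  · intro h
    obtain ⟨N, hN, he⟩ := exists_mem_symmDiff_of_isCircular_toBidir hM h
    exact isBFlexible_of_mem_symmDiff hM hN he

theorem exists_toBidir_isWalk_of_walk {u v : V} (p : G.Walk u v) :
    ∃ L, (G.toBidir M).IsWalk u v L ∧ u :: L.map (G.toBidir M).stepHead = p.support ∧
      L.map (fun s => (s.1 : Sym2 V)) = p.edges := by
  induction p with
  | nil => exact ⟨[], by simp [isWalk_iff], rfl, rfl⟩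
  | cons h p ih =>
    obtain ⟨L, hL, hsupp, hedges⟩ := ih
    obtain ⟨d, htail, hhead⟩ := exists_toBidir_step (M := M) ⟨_, G.mem_edgeSet.2 h⟩ rfl
    refine ⟨(⟨_, G.mem_edgeSet.2 h⟩, d) :: L, (isWalk_cons_iff_s11 _).2 ⟨htail, by rwa [hhead]⟩, ?_, ?_⟩
    · simp [hhead, ← hsupp]
    · simp [hedges]

theorem exists_walk_of_toBidir_isWalk {u v : V} {L : List (G.edgeSet × Bool)}
    (h : (G.toBidir M).IsWalk u v L) :
    ∃ p : G.Walk u v, p.support = u :: L.map (G.toBidir M).stepHead ∧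
      p.edges = L.map (fun s => (s.1 : Sym2 V)) := by
  induction L generalizing u with
  | nil =>
    obtain rfl : u = v := ((isWalk_iff _).1 h).2.1 rfl
    exact ⟨.nil, rfl, rfl⟩
  | cons s L ih =>
    obtain ⟨rfl, hL⟩ := (isWalk_cons_iff_s11 _).1 h
    obtain ⟨p, hsupp, hedges⟩ := ih hL
    refine ⟨.cons (toBidir_adj_stepTail_stepHead s) p, by simp [hsupp], ?_⟩
    simp [hedges, mk_toBidir_stepTail_stepHead]

theorem bFlexConn_iff_circConn_toBidir {b : V → ℕ} (hM : G.IsBFactor (fun w => (b w : ℤ)) M)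
    (u v : V) : G.BFlexConn b u v ↔ (G.toBidir M).CircConn u v := by
  constructor
  · rintro ⟨p, hp, hflex⟩
    obtain ⟨L, hL, hsupp, hedges⟩ := exists_toBidir_isWalk_of_walk (M := M) p
    refine ⟨L, hL, hsupp ▸ hp.support_nodup, fun s hs => ?_⟩
    exact (isBFlexible_iff_isCircular_toBidir hM s.1).1
      (hflex _ (hedges ▸ List.mem_map_of_mem hs))
  · rintro ⟨L, hL, hnodup, hcirc⟩
    obtain ⟨p, hsupp, hedges⟩ := exists_walk_of_toBidir_isWalk hL
    refine ⟨p, Walk.isPath_def _ |>.2 (hsupp ▸ hnodup), ?_⟩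
    rw [hedges, List.forall_mem_map]
    exact fun s hs => (isBFlexible_iff_isCircular_toBidir hM s.1).2 (hcirc s hs)

end ToBidir

end SimpleGraph

/-- Let `G` be a `b`-factorizable graph, `M` a `b`-factor of `G`,
and `α` a sign. Then for all vertices `u, v`, `u ∼_{b,α} v` holds in `G` iff
`u ∼_α v` holds in the bidirected graph `G^M`. -/
theorem bSim_iff_simRel_toBidir (G : SimpleGraph V) (b : V → ℕ) (M : Finset (Sym2 V))
    (hM : G.IsBFactor (fun w => (b w : ℤ)) M) (α : Bool) (u v : V) :
    G.BSim b α u v ↔ (G.toBidir M).SimRel α u v := by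
  by_cases huv : u = v
  · exact iff_of_true (.inl huv) (.inl huv)
  rw [SimpleGraph.BSim, BidirGraph.SimRel, or_iff_right huv, or_iff_right huv,
    SimpleGraph.bFlexConn_iff_circConn_toBidir hM, exists_or,
    ← SimpleGraph.exists_isBFactor_iff_exists_isABDitrail hM α huv,
    ← SimpleGraph.exists_isBFactor_iff_exists_isABDitrail hM α (Ne.symm huv)]
  simp only [Bool.toSign, add_comm, or_self]
end
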